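/- Let ε ∈ {1,−1}. Let V be an isotypical H-module of type π (every irreducible invariant subspace of V is isomorphic to a fixed irreducible H-module π), equipped with an H-invariant nondegenerate ε-symmetric complex-bilinear form B (symmetric if ε = 1, skew-symmetric if ε = −1). Suppose π admits a nonzero H-invariant (−ε)-symmetric bilinear form (π is (−ε)-orthogonal). Then there is an H-invariant subspace Z ⊆ V with V = Z ⊕ Z' for some invariant Z', such that (V,B) is H-equivariantly isometric to Z × Z* equipped with the tautological ε-symmetric bilinear form (v,v*)·(w,w*) = ε⟨v*,w⟩ + ⟨w*,v⟩; in particular Z is B-isotropic and dim V = 2 dim Z. -/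

import Mathlib

/-!
Every irreducible invariant subspace `U ≅ π` of `V` is isotropic: transported to `π`, `B|_U`
becomes an invariant `ε`-symmetric form, which by Schur's lemma is a multiple of the given
`(-ε)`-symmetric one, hence zero. One then enlarges a pair `Z, Z'` of invariant isotropic
subspaces put in duality by `B`, starting from `0, 0`: inside `(Z ⊕ Z')^⊥` pick an irreducible `U`
and an invariant complement `C` of `(Z ⊕ Z' ⊕ U)^⊥`. Counting dimensions, `C` has the dimension of
`U`, so in the isotypical `V` it is irreducible, hence isotropic; it pairs perfectly with `U`, and
`Z ⊕ U, Z' ⊕ C` is a larger such pair. Once `Z ⊕ Z' = V`, the map `v ↦ (pr_Z v, B(·, v)|_Z)` is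
the required isometry.
-/

variable {H V P : Type*}

/-- `U` is invariant under the representation `ρ`. -/
def Invt [Group H] [AddCommGroup V] [Module ℂ V] (ρ : Representation ℂ H V)
    (U : Submodule ℂ V) : Prop :=
  ∀ (h : H) (v : V), v ∈ U → ρ h v ∈ U

/-- `V` is a semisimple `H`-module. -/
def Semisimple [Group H] [AddCommGroup V] [Module ℂ V] (ρ : Representation ℂ H V) : Prop :=
  ∀ U : Submodule ℂ V, Invt ρ U → ∃ U', Invt ρ U' ∧ IsCompl U U'

/-- `U` is an irreducible invariant subspace. -/
def IrredSub [Group H] [AddCommGroup V] [Module ℂ V] (ρ : Representation ℂ H V)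
    (U : Submodule ℂ V) : Prop :=
  Invt ρ U ∧ U ≠ ⊥ ∧ ∀ U' ≤ U, Invt ρ U' → U' = ⊥ ∨ U' = U

/-- The invariant subspace `U ⊆ V` is isomorphic, as an `H`-module, to the external
`H`-module `P`. -/
def RepIsoExt [Group H] [AddCommGroup V] [Module ℂ V] [AddCommGroup P] [Module ℂ P]
    (ρ : Representation ℂ H V) (ρP : Representation ℂ H P) (U : Submodule ℂ V) : Prop :=
  ∃ e : U ≃ₗ[ℂ] P, ∀ (h : H) (v : V) (hv : v ∈ U) (hv' : ρ h v ∈ U),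
    e ⟨ρ h v, hv'⟩ = ρP h (e ⟨v, hv⟩)

open Module LinearMap

section Invariance

variable [Group H] [AddCommGroup V] [Module ℂ V] {ρ : Representation ℂ H V}

lemma invt_bot (ρ : Representation ℂ H V) : Invt ρ ⊥ := by
  intro h v hv
  rw [Submodule.mem_bot] at hv ⊢
  rw [hv, map_zero]

lemma Invt.sup {A C : Submodule ℂ V} (hA : Invt ρ A) (hC : Invt ρ C) : Invt ρ (A ⊔ C) := by
  intro h v hv
  obtain ⟨a, ha, c, hc, rfl⟩ := Submodule.mem_sup.mp hv
  rw [map_add]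
  exact Submodule.add_mem_sup (hA h a ha) (hC h c hc)

lemma Invt.inf {A C : Submodule ℂ V} (hA : Invt ρ A) (hC : Invt ρ C) : Invt ρ (A ⊓ C) :=
  fun h v hv => ⟨hA h v hv.1, hC h v hv.2⟩

lemma Invt.orthogonal {B : LinearMap.BilinForm ℂ V} (hB : ∀ h v w, B (ρ h v) (ρ h w) = B v w)
    {W : Submodule ℂ V} (hW : Invt ρ W) : Invt ρ (B.orthogonal W) := by
  intro h v hv n hn
  simpa [hv _ (hW h⁻¹ n hn)] using hB h (ρ h⁻¹ n) v

lemma invt_ker {B : LinearMap.BilinForm ℂ V}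
    (hB : ∀ h v w, B (ρ h v) (ρ h w) = B v w) : Invt ρ (ker B) := by
  intro h v hv
  rw [mem_ker] at hv ⊢
  ext w
  simpa [hv] using hB h v (ρ h⁻¹ w)

lemma Semisimple.exists_invt_compl_of_le (hss : Semisimple ρ) {A E : Submodule ℂ V}
    (hA : Invt ρ A) (hE : Invt ρ E) (hAE : A ≤ E) :
    ∃ C, Invt ρ C ∧ C ≤ E ∧ Disjoint C A ∧ C ⊔ A = E := by
  obtain ⟨C₀, hC₀, hcompl⟩ := hss A hA
  refine ⟨C₀ ⊓ E, hC₀.inf hE, inf_le_right, hcompl.disjoint.symm.mono_left inf_le_left, ?_⟩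
  rw [sup_comm, ← sup_inf_assoc_of_le _ hAE, hcompl.sup_eq_top, top_inf_eq]

lemma exists_irredSub_le [FiniteDimensional ℂ V] {W : Submodule ℂ V} (hW : Invt ρ W)
    (hW0 : W ≠ ⊥) : ∃ U ≤ W, IrredSub ρ U := by
  obtain ⟨U, ⟨hUW, hU, hU0⟩, hmin⟩ :=
    wellFounded_lt.has_min {U | U ≤ W ∧ Invt ρ U ∧ U ≠ ⊥} ⟨W, le_rfl, hW, hW0⟩
  refine ⟨U, hUW, hU, hU0, fun U' hU'U hU' => ?_⟩
  by_contra! h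
  exact hmin U' ⟨hU'U.trans hUW, hU', h.1⟩ (lt_of_le_of_ne hU'U h.2)

lemma projection_rep_apply {Z Z' : Submodule ℂ V} (hZ : Invt ρ Z) (hZ' : Invt ρ Z')
    (hc : IsCompl Z Z') (h : H) (v : V) :
    Z.projection Z' hc (ρ h v) = ρ h (Z.projection Z' hc v) := by
  conv_lhs => rw [← Submodule.projection_add_projection_eq_self hc v, map_add, map_add]
  rw [Submodule.projection_apply_of_mem_left hc (hZ h _ (Submodule.projection_apply_mem hc v)),
    Submodule.projection_apply_of_mem_right hc (hZ' h _ (Submodule.projection_apply_mem _ v)),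
    add_zero]

end Invariance

section Schur

variable [Group H] [AddCommGroup P] [Module ℂ P] [FiniteDimensional ℂ P]
  {ρP : Representation ℂ H P}

lemma exists_eq_smul_one_of_commute [Nontrivial P] (hirr : ∀ U, Invt ρP U → U = ⊥ ∨ U = ⊤)
    (T : End ℂ P) (hT : ∀ h p, T (ρP h p) = ρP h (T p)) : ∃ μ : ℂ, T = μ • 1 := by
  obtain ⟨μ, hμ⟩ := Module.End.exists_eigenvalue T
  have hinv : Invt ρP (T.eigenspace μ) := by
    intro h v hv
    rw [Module.End.mem_eigenspace_iff] at hv ⊢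
    rw [hT, hv, map_smul]
  refine ⟨μ, LinearMap.ext fun p => ?_⟩
  have hp : p ∈ T.eigenspace μ := ((hirr _ hinv).resolve_left hμ).symm ▸ Submodule.mem_top
  exact Module.End.mem_eigenspace_iff.mp hp

lemma exists_eq_smul_of_invariant (hirr : ∀ U, Invt ρP U → U = ⊥ ∨ U = ⊤)
    {b b' : LinearMap.BilinForm ℂ P} (hb : ∀ h p q, b (ρP h p) (ρP h q) = b p q)
    (hb' : ∀ h p q, b' (ρP h p) (ρP h q) = b' p q) (hb0 : b ≠ 0) : ∃ μ : ℂ, b' = μ • b := by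
  have hinj : Function.Injective b := by
    rw [← ker_eq_bot]
    refine (hirr _ (invt_ker hb)).resolve_right fun h => hb0 <| LinearMap.ext fun p => ?_
    exact mem_ker.mp (h ▸ Submodule.mem_top)
  obtain ⟨p₀, hp₀⟩ := DFunLike.ne_iff.mp hb0
  have : Nontrivial P := nontrivial_of_ne p₀ 0 (by rintro rfl; simp at hp₀)
  let e : P ≃ₗ[ℂ] Dual ℂ P := b.linearEquivOfInjective hinj Subspace.dual_finrank_eq.symm
  let T : End ℂ P := e.symm.toLinearMap ∘ₗ b'
  have hbT : ∀ p, b (T p) = b' p := fun p => e.apply_symm_apply (b' p)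
  obtain ⟨μ, hμ⟩ := exists_eq_smul_one_of_commute hirr T fun h p =>
    hinj <| LinearMap.ext fun q => by
    have h1 := hb' h p (ρP h⁻¹ q)
    have h2 := hb h (T p) (ρP h⁻¹ q)
    simp only [Representation.self_inv_apply] at h1 h2
    rw [hbT, h1, ← hbT, h2]
  exact ⟨μ, LinearMap.ext fun p => by rw [← hbT, hμ]; simp⟩

lemma eq_zero_of_invariant_of_symm (hirr : ∀ U, Invt ρP U → U = ⊥ ∨ U = ⊤) {ε : ℂ}
    {b b' : LinearMap.BilinForm ℂ P} (hb : ∀ h p q, b (ρP h p) (ρP h q) = b p q)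
    (hb' : ∀ h p q, b' (ρP h p) (ρP h q) = b' p q) (hb0 : b ≠ 0)
    (hbsym : ∀ p q, b q p = -ε * b p q) (hb'sym : ∀ p q, b' q p = ε * b' p q) : b' = 0 := by
  obtain ⟨μ, hμ⟩ := exists_eq_smul_of_invariant hirr hb hb' hb0
  have hanti : ∀ p q, b' q p = -(ε * b' p q) := fun p q => by
    rw [hμ]
    simp only [LinearMap.smul_apply, smul_eq_mul]
    rw [hbsym]
    ring
  ext p q
  rw [LinearMap.zero_apply, LinearMap.zero_apply]
  linear_combination (hb'sym q p + hanti q p) / 2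

end Schur

namespace LinearMap.BilinForm

variable [AddCommGroup V] [Module ℂ V] {B : LinearMap.BilinForm ℂ V}

lemma orthogonal_sup (A C : Submodule ℂ V) :
    B.orthogonal (A ⊔ C) = B.orthogonal A ⊓ B.orthogonal C := by
  refine le_antisymm (le_inf (orthogonal_le le_sup_left) (orthogonal_le le_sup_right)) ?_
  rintro v ⟨hA, hC⟩ n hn
  obtain ⟨a, ha, c, hc, rfl⟩ := Submodule.mem_sup.mp hn
  rw [map_add, LinearMap.add_apply, hA a ha, hC c hc, add_zero]

lemma le_orthogonal_comm (hB : B.IsRefl) {A C : Submodule ℂ V} :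
    A ≤ B.orthogonal C → C ≤ B.orthogonal A :=
  fun h c hc _ ha => hB _ _ (h ha c hc)

lemma sup_le_orthogonal_sup (hB : B.IsRefl) {A C : Submodule ℂ V} (hA : A ≤ B.orthogonal A)
    (hC : C ≤ B.orthogonal C) (hAC : C ≤ B.orthogonal A) : A ⊔ C ≤ B.orthogonal (A ⊔ C) := by
  rw [orthogonal_sup]
  exact sup_le (le_inf hA (le_orthogonal_comm hB hAC)) (le_inf hAC hC)

lemma disjoint_sup_orthogonal_sup {Z Z' U C : Submodule ℂ V} (hZ : Disjoint Z (B.orthogonal Z'))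
    (hU : Disjoint U (B.orthogonal C)) (hUZ' : U ≤ B.orthogonal Z') :
    Disjoint (Z ⊔ U) (B.orthogonal (Z' ⊔ C)) := by
  rw [orthogonal_sup, Submodule.disjoint_def]
  rintro x hx ⟨hxZ', hxC⟩
  obtain ⟨z, hz, u, hu, rfl⟩ := Submodule.mem_sup.mp hx
  have hz0 : z = 0 := Submodule.disjoint_def.mp hZ z hz fun n hn => by
    simpa [hUZ' hu n hn] using hxZ' n hn
  subst hz0
  rw [zero_add] at hxC ⊢
  exact Submodule.disjoint_def.mp hU u hu hxC

end LinearMap.BilinForm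

section Isotypic

variable [Group H] [AddCommGroup V] [Module ℂ V] [AddCommGroup P] [Module ℂ P]
  {ρ : Representation ℂ H V} {ρP : Representation ℂ H P}

lemma RepIsoExt.le_orthogonal [FiniteDimensional ℂ P] (hirr : ∀ U, Invt ρP U → U = ⊥ ∨ U = ⊤)
    {ε : ℂ} {b : LinearMap.BilinForm ℂ P} (hb : ∀ h p q, b (ρP h p) (ρP h q) = b p q)
    (hb0 : b ≠ 0) (hbsym : ∀ p q, b q p = -ε * b p q) {B : LinearMap.BilinForm ℂ V}
    (hB : ∀ h v w, B (ρ h v) (ρ h w) = B v w) (hBsym : ∀ v w, B w v = ε * B v w)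
    {U : Submodule ℂ V} (hU : Invt ρ U) (hiso : RepIsoExt ρ ρP U) : U ≤ B.orthogonal U := by
  obtain ⟨e, he⟩ := hiso
  let c : P →ₗ[ℂ] V := U.subtype ∘ₗ e.symm.toLinearMap
  have hc : ∀ h p, c (ρP h p) = ρ h (c p) := by
    intro h p
    have := he h _ (e.symm p).2 (hU h _ (e.symm p).2)
    simp only [Subtype.coe_eta, LinearEquiv.apply_symm_apply] at this
    simp [c, ← this]
  have hzero : B.compl₁₂ c c = 0 :=
    eq_zero_of_invariant_of_symm hirr hb (fun h p q => by simp [hc, hB]) hb0 hbsym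
      fun p q => hBsym _ _
  intro w hw u hu
  simpa [c] using congr($hzero (e ⟨u, hu⟩) (e ⟨w, hw⟩))

lemma IrredSub.of_finrank_le [FiniteDimensional ℂ V]
    (hisot : ∀ U, IrredSub ρ U → RepIsoExt ρ ρP U) {U C : Submodule ℂ V} (hU : IrredSub ρ U)
    (hC : Invt ρ C) (hC0 : C ≠ ⊥) (hCU : finrank ℂ C ≤ finrank ℂ U) : IrredSub ρ C := by
  obtain ⟨U₀, hU₀C, hU₀⟩ := exists_irredSub_le hC hC0
  have hU₀U : finrank ℂ U₀ = finrank ℂ U :=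
    (hisot U₀ hU₀).choose.finrank_eq.trans (hisot U hU).choose.finrank_eq.symm
  rwa [← Submodule.eq_of_le_of_finrank_le hU₀C (hCU.trans hU₀U.ge)]

end Isotypic

section HyperbolicPair

variable [Group H] [AddCommGroup V] [Module ℂ V]

structure IsHyperbolicPair (ρ : Representation ℂ H V) (B : LinearMap.BilinForm ℂ V)
    (Z Z' : Submodule ℂ V) : Prop where
  invt_left : Invt ρ Z
  invt_right : Invt ρ Z'
  isotropic_left : Z ≤ B.orthogonal Z
  isotropic_right : Z' ≤ B.orthogonal Z'
  disjoint_left : Disjoint Z (B.orthogonal Z')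
  disjoint_right : Disjoint Z' (B.orthogonal Z)

namespace IsHyperbolicPair

variable {ρ : Representation ℂ H V} {B : LinearMap.BilinForm ℂ V} {Z Z' : Submodule ℂ V}

lemma bot (ρ : Representation ℂ H V) (B : LinearMap.BilinForm ℂ V) :
    IsHyperbolicPair ρ B ⊥ ⊥ :=
  ⟨invt_bot ρ, invt_bot ρ, bot_le, bot_le, disjoint_bot_left, disjoint_bot_left⟩

lemma disjoint_orthogonal_sup (hp : IsHyperbolicPair ρ B Z Z') :
    Disjoint (Z ⊔ Z') (B.orthogonal (Z ⊔ Z')) := by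
  simpa only [sup_comm Z'] using
    BilinForm.disjoint_sup_orthogonal_sup hp.disjoint_left hp.disjoint_right hp.isotropic_right

lemma sup (hB : B.IsRefl) {U C : Submodule ℂ V} (hp : IsHyperbolicPair ρ B Z Z')
    (hq : IsHyperbolicPair ρ B U C) (hU : U ≤ B.orthogonal (Z ⊔ Z'))
    (hC : C ≤ B.orthogonal (Z ⊔ Z')) : IsHyperbolicPair ρ B (Z ⊔ U) (Z' ⊔ C) := by
  rw [BilinForm.orthogonal_sup, le_inf_iff] at hU hC
  exact ⟨hp.invt_left.sup hq.invt_left, hp.invt_right.sup hq.invt_right,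
    BilinForm.sup_le_orthogonal_sup hB hp.isotropic_left hq.isotropic_left hU.1,
    BilinForm.sup_le_orthogonal_sup hB hp.isotropic_right hq.isotropic_right hC.2,
    BilinForm.disjoint_sup_orthogonal_sup hp.disjoint_left hq.disjoint_left hU.2,
    BilinForm.disjoint_sup_orthogonal_sup hp.disjoint_right hq.disjoint_right hC.1⟩

lemma isCompl (hp : IsHyperbolicPair ρ B Z Z') (htop : Z ⊔ Z' = ⊤) : IsCompl Z Z' :=
  ⟨hp.disjoint_left.mono_right hp.isotropic_right, codisjoint_iff.mpr htop⟩

lemma injective_projectionOnto_prod (hp : IsHyperbolicPair ρ B Z Z') (hc : IsCompl Z Z') :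
    Function.Injective ((Z.projectionOnto Z' hc).prod (B.domRestrict Z).flip) := by
  rw [← ker_eq_bot, Submodule.eq_bot_iff]
  intro v hv
  rw [mem_ker, Prod.ext_iff] at hv
  refine Submodule.disjoint_def.mp hp.disjoint_right v
    ((Submodule.projectionOnto_apply_eq_zero_iff hc).mp hv.1) fun z hz => ?_
  exact congr($(hv.2) ⟨z, hz⟩)

lemma apply_eq_tautological {ε : ℂ} (hBsym : ∀ v w, B w v = ε * B v w)
    (hp : IsHyperbolicPair ρ B Z Z') (hc : IsCompl Z Z') (v v' : V) :
    ε * B (Z.projection Z' hc v') v + B (Z.projection Z' hc v) v' = B v v' := by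
  have hproj : ∀ z ∈ Z, ∀ y ∈ Z', Z.projection Z' hc (z + y) = z := fun z hz y hy => by
    rw [map_add, Submodule.projection_apply_of_mem_left hc hz,
      Submodule.projection_apply_of_mem_right hc hy, add_zero]
  have hV : ∀ x : V, x ∈ Z ⊔ Z' := fun x => hc.sup_eq_top ▸ Submodule.mem_top
  rw [← hBsym]
  obtain ⟨z, hz, y, hy, rfl⟩ := Submodule.mem_sup.mp (hV v)
  obtain ⟨z', hz', y', hy', rfl⟩ := Submodule.mem_sup.mp (hV v')
  rw [hproj z hz y hy, hproj z' hz' y' hy']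
  simp only [map_add, LinearMap.add_apply, hp.isotropic_left hz' z hz,
    hp.isotropic_right hy' y hy]
  ring

variable [FiniteDimensional ℂ V] [AddCommGroup P] [Module ℂ P]

lemma exists_lt {ρP : Representation ℂ H P} (hss : Semisimple ρ)
    (hisot : ∀ U, IrredSub ρ U → RepIsoExt ρ ρP U)
    (hiso : ∀ U, IrredSub ρ U → U ≤ B.orthogonal U) (hB : ∀ h v w, B (ρ h v) (ρ h w) = B v w)
    (hBr : B.IsRefl) (hBnd : B.Nondegenerate) (hp : IsHyperbolicPair ρ B Z Z')
    (htop : Z ⊔ Z' ≠ ⊤) : ∃ Z₁ Z₁', IsHyperbolicPair ρ B Z₁ Z₁' ∧ Z < Z₁ := by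
  set D := Z ⊔ Z'
  have hD : Invt ρ D := hp.invt_left.sup hp.invt_right
  have hDE : IsCompl D (B.orthogonal D) :=
    (BilinForm.isCompl_orthogonal_iff_disjoint hBr).mpr hp.disjoint_orthogonal_sup
  have hE0 : B.orthogonal D ≠ ⊥ := fun h => htop (by simpa [h] using hDE.sup_eq_top)
  obtain ⟨U, hUE, hU⟩ := exists_irredSub_le (hD.orthogonal hB) hE0
  obtain ⟨C, hC, hCE, hCA, hCAE⟩ := hss.exists_invt_compl_of_le ((hD.sup hU.1).orthogonal hB)
    (hD.orthogonal hB) (BilinForm.orthogonal_le le_sup_left)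
  have hDU : Disjoint D U := hDE.disjoint.mono_right hUE
  have hCU : finrank ℂ C = finrank ℂ U := by
    have h1 := Submodule.finrank_sup_add_finrank_inf_eq C (B.orthogonal (D ⊔ U))
    have h2 := Submodule.finrank_sup_add_finrank_inf_eq D U
    have h3 := BilinForm.finrank_orthogonal hBnd D
    have h4 := BilinForm.finrank_orthogonal hBnd (D ⊔ U)
    have h5 := Submodule.finrank_le (D ⊔ U)
    rw [hCAE, hCA.eq_bot, finrank_bot] at h1
    rw [hDU.eq_bot, finrank_bot] at h2
    omega
  have hC0 : C ≠ ⊥ := fun h => hU.2.1 <| Submodule.finrank_eq_zero.mp <| by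
    rw [← hCU, h, finrank_bot]
  have hCU' : Disjoint C (B.orthogonal U) := by
    refine Submodule.disjoint_def.mpr fun c hc hcU => Submodule.disjoint_def.mp hCA c hc ?_
    rw [BilinForm.orthogonal_sup]
    exact ⟨hCE hc, hcU⟩
  have hUC' : Disjoint U (B.orthogonal C) := by
    rcases hU.2.2 _ inf_le_left (hU.1.inf (hC.orthogonal hB)) with h | h
    · exact disjoint_iff.mpr h
    · exact absurd (hCU'.eq_bot_of_le (BilinForm.le_orthogonal_comm hBr (h ▸ inf_le_right))) hC0
  have hUC : IsHyperbolicPair ρ B U C := ⟨hU.1, hC, hiso U hU,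
    hiso C (hU.of_finrank_le hisot hC hC0 hCU.le), hUC', hCU'⟩
  refine ⟨Z ⊔ U, Z' ⊔ C, hp.sup hBr hUC hUE hCE, left_lt_sup.mpr fun hUZ => hU.2.1 ?_⟩
  exact hDU.eq_bot_of_ge (hUZ.trans le_sup_left)

lemma exists_sup_eq_top {ρP : Representation ℂ H P} (hss : Semisimple ρ)
    (hisot : ∀ U, IrredSub ρ U → RepIsoExt ρ ρP U)
    (hiso : ∀ U, IrredSub ρ U → U ≤ B.orthogonal U) (hB : ∀ h v w, B (ρ h v) (ρ h w) = B v w)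
    (hBr : B.IsRefl) (hBnd : B.Nondegenerate) :
    ∃ Z Z', IsHyperbolicPair ρ B Z Z' ∧ Z ⊔ Z' = ⊤ := by
  obtain ⟨Z, ⟨Z', hp⟩, hmax⟩ :=
    wellFounded_gt.has_min {Z | ∃ Z', IsHyperbolicPair ρ B Z Z'} ⟨⊥, ⊥, bot ρ B⟩
  refine ⟨Z, Z', hp, by_contra fun htop => ?_⟩
  obtain ⟨Z₁, Z₁', hp₁, hlt⟩ := hp.exists_lt hss hisot hiso hB hBr hBnd htop
  exact hmax Z₁ ⟨Z₁', hp₁⟩ hlt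

lemma finrank_eq_two_mul (hBnd : B.Nondegenerate)
    (hp : IsHyperbolicPair ρ B Z Z') (htop : Z ⊔ Z' = ⊤) :
    finrank ℂ V = 2 * finrank ℂ Z := by
  have hle := LinearMap.finrank_le_finrank_of_injective
    (hp.injective_projectionOnto_prod (hp.isCompl htop))
  have hge := Submodule.finrank_mono hp.isotropic_left
  rw [finrank_prod, Subspace.dual_finrank_eq] at hle
  rw [BilinForm.finrank_orthogonal hBnd] at hge
  have := Submodule.finrank_le Z
  omega

theorem exists_isometry {ε : ℂ} (hB : ∀ h v w, B (ρ h v) (ρ h w) = B v w)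
    (hBsym : ∀ v w, B w v = ε * B v w) (hBnd : B.Nondegenerate) (hp : IsHyperbolicPair ρ B Z Z')
    (htop : Z ⊔ Z' = ⊤) :
    ∃ Φ : V ≃ₗ[ℂ] Z × (Z →ₗ[ℂ] ℂ),
      (∀ (h : H) (v : V), ((Φ (ρ h v)).1 : V) = ρ h ((Φ v).1 : V)) ∧
      (∀ (h : H) (v : V) (w : V) (hw : w ∈ Z) (hw' : ρ h⁻¹ w ∈ Z),
        (Φ (ρ h v)).2 ⟨w, hw⟩ = (Φ v).2 ⟨ρ h⁻¹ w, hw'⟩) ∧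
      (∀ v v' : V, ε * ((Φ v).2 (Φ v').1) + (Φ v').2 (Φ v).1 = B v v') := by
  have hc := hp.isCompl htop
  refine ⟨LinearMap.linearEquivOfInjective _ (hp.injective_projectionOnto_prod hc)
    (by rw [finrank_prod, Subspace.dual_finrank_eq, hp.finrank_eq_two_mul hBnd htop, two_mul]),
    fun h v => projection_rep_apply hp.invt_left hp.invt_right hc h v,
    fun h v w _ _ => by simpa using hB h (ρ h⁻¹ w) v,
    hp.apply_eq_tautological hBsym hc⟩

end IsHyperbolicPair

end HyperbolicPair

theorem stmt_7_general [Group H] [AddCommGroup V] [Module ℂ V] [FiniteDimensional ℂ V]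
    [AddCommGroup P] [Module ℂ P] [FiniteDimensional ℂ P]
    (ε : ℂ)
    (ρ : Representation ℂ H V) (hss : Semisimple ρ)
    (ρP : Representation ℂ H P)
    (hPirr : ∀ U : Submodule ℂ P, (∀ (h : H) (v : P), v ∈ U → ρP h v ∈ U) →
      U = ⊥ ∨ U = ⊤)
    -- V is isotypical of type π
    (hisot : ∀ U : Submodule ℂ V, IrredSub ρ U → RepIsoExt ρ ρP U)
    -- π is (−ε)-orthogonal: it admits a nonzero invariant (−ε)-symmetric bilinear form
    (horth : ∃ b : P → P → ℂ,
      (∀ v v' w, b (v + v') w = b v w + b v' w) ∧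
      (∀ v w w', b v (w + w') = b v w + b v w') ∧
      (∀ (a : ℂ) (v w : P), b (a • v) w = a * b v w) ∧
      (∀ (a : ℂ) (v w : P), b v (a • w) = a * b v w) ∧
      (∀ (h : H) (v w : P), b (ρP h v) (ρP h w) = b v w) ∧
      (∀ v w, b w v = -ε * b v w) ∧ (∃ v w, b v w ≠ 0))
    -- B is an invariant nondegenerate ε-symmetric bilinear form on V
    (B : V → V → ℂ)
    (hB1 : ∀ v v' w, B (v + v') w = B v w + B v' w)
    (hB2 : ∀ v w w', B v (w + w') = B v w + B v w')
    (hB3 : ∀ (a : ℂ) (v w : V), B (a • v) w = a * B v w)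
    (hB4 : ∀ (a : ℂ) (v w : V), B v (a • w) = a * B v w)
    (hBinv : ∀ (h : H) (v w : V), B (ρ h v) (ρ h w) = B v w)
    (hBsym : ∀ v w, B w v = ε * B v w)
    (hBnd : ∀ v, (∀ w, B v w = 0) → v = 0) :
    ∃ Z Z' : Submodule ℂ V, Invt ρ Z ∧ Invt ρ Z' ∧ IsCompl Z Z' ∧
      -- Z is B-isotropic and dim V = 2 dim Z
      (∀ v ∈ Z, ∀ w ∈ Z, B v w = 0) ∧
      Module.finrank ℂ V = 2 * Module.finrank ℂ Z ∧
      -- (V,B) is H-equivariantly isometric to Z × Z* with the tautological form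
      ∃ Φ : V ≃ₗ[ℂ] Z × (Z →ₗ[ℂ] ℂ),
        (∀ (h : H) (v : V), ((Φ (ρ h v)).1 : V) = ρ h ((Φ v).1 : V)) ∧
        (∀ (h : H) (v : V) (w : V) (hw : w ∈ Z) (hw' : ρ h⁻¹ w ∈ Z),
          (Φ (ρ h v)).2 ⟨w, hw⟩ = (Φ v).2 ⟨ρ h⁻¹ w, hw'⟩) ∧
        (∀ v v' : V, ε * ((Φ v).2 (Φ v').1) + (Φ v').2 (Φ v).1 = B v v') := by
  obtain ⟨b, hb1, hb2, hb3, hb4, hbinv, hbsym, p, q, hpq⟩ := horth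
  let b' : LinearMap.BilinForm ℂ P := LinearMap.mk₂ ℂ b hb1 hb3 hb2 hb4
  let B' : LinearMap.BilinForm ℂ V := LinearMap.mk₂ ℂ B hB1 hB3 hB2 hB4
  have hb'0 : b' ≠ 0 := fun h => hpq congr($h p q)
  have hB'r : B'.IsRefl := fun v w h => by simp [B', hBsym v w, show B v w = 0 from h]
  have hB'nd : B'.Nondegenerate :=
    ⟨hBnd, fun w hw => hBnd w fun v => by rw [hBsym v w, show B v w = 0 from hw v, mul_zero]⟩
  have hiso : ∀ U, IrredSub ρ U → U ≤ B'.orthogonal U := fun U hU =>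
    (hisot U hU).le_orthogonal hPirr hbinv hb'0 hbsym hBinv hBsym hU.1
  obtain ⟨Z, Z', hp, htop⟩ :=
    IsHyperbolicPair.exists_sup_eq_top hss hisot hiso hBinv hB'r hB'nd
  exact ⟨Z, Z', hp.invt_left, hp.invt_right, hp.isCompl htop,
    fun v hv w hw => hp.isotropic_left hw v hv, hp.finrank_eq_two_mul hB'nd htop,
    hp.exists_isometry hBinv hBsym hB'nd htop⟩

/-- Let `(V,B)` be an isotypical `H`-module of type `π` with an invariant
nondegenerate `ε`-symmetric bilinear form, where `π` is `(−ε)`-orthogonal. Then `V = Z ⊕ Z'`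
with `Z, Z'` invariant, and `(V,B)` is `H`-equivariantly isometric to `Z × Z*` with the
tautological `ε`-symmetric bilinear form; in particular `Z` is `B`-isotropic and
`dim V = 2 dim Z`. -/
theorem stmt_7 [Group H] [AddCommGroup V] [Module ℂ V] [FiniteDimensional ℂ V]
    [AddCommGroup P] [Module ℂ P] [FiniteDimensional ℂ P]
    (ε : ℂ) (hε : ε = 1 ∨ ε = -1)
    (ρ : Representation ℂ H V) (hss : Semisimple ρ)
    (ρP : Representation ℂ H P)
    (hPss : ∀ U : Submodule ℂ P, (∀ (h : H) (v : P), v ∈ U → ρP h v ∈ U) →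
      ∃ U', (∀ (h : H) (v : P), v ∈ U' → ρP h v ∈ U') ∧ IsCompl U U')
    (hPirr : ∀ U : Submodule ℂ P, (∀ (h : H) (v : P), v ∈ U → ρP h v ∈ U) →
      U = ⊥ ∨ U = ⊤)
    -- V is isotypical of type π
    (hisot : ∀ U : Submodule ℂ V, IrredSub ρ U → RepIsoExt ρ ρP U)
    -- π is (−ε)-orthogonal: it admits a nonzero invariant (−ε)-symmetric bilinear form
    (horth : ∃ b : P → P → ℂ,
      (∀ v v' w, b (v + v') w = b v w + b v' w) ∧
      (∀ v w w', b v (w + w') = b v w + b v w') ∧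
      (∀ (a : ℂ) (v w : P), b (a • v) w = a * b v w) ∧
      (∀ (a : ℂ) (v w : P), b v (a • w) = a * b v w) ∧
      (∀ (h : H) (v w : P), b (ρP h v) (ρP h w) = b v w) ∧
      (∀ v w, b w v = -ε * b v w) ∧ (∃ v w, b v w ≠ 0))
    -- B is an invariant nondegenerate ε-symmetric bilinear form on V
    (B : V → V → ℂ)
    (hB1 : ∀ v v' w, B (v + v') w = B v w + B v' w)
    (hB2 : ∀ v w w', B v (w + w') = B v w + B v w')
    (hB3 : ∀ (a : ℂ) (v w : V), B (a • v) w = a * B v w)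
    (hB4 : ∀ (a : ℂ) (v w : V), B v (a • w) = a * B v w)
    (hBinv : ∀ (h : H) (v w : V), B (ρ h v) (ρ h w) = B v w)
    (hBsym : ∀ v w, B w v = ε * B v w)
    (hBnd : ∀ v, (∀ w, B v w = 0) → v = 0) :
    ∃ Z Z' : Submodule ℂ V, Invt ρ Z ∧ Invt ρ Z' ∧ IsCompl Z Z' ∧
      -- Z is B-isotropic and dim V = 2 dim Z
      (∀ v ∈ Z, ∀ w ∈ Z, B v w = 0) ∧
      Module.finrank ℂ V = 2 * Module.finrank ℂ Z ∧
      -- (V,B) is H-equivariantly isometric to Z × Z* with the tautological form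
      ∃ Φ : V ≃ₗ[ℂ] Z × (Z →ₗ[ℂ] ℂ),
        (∀ (h : H) (v : V), ((Φ (ρ h v)).1 : V) = ρ h ((Φ v).1 : V)) ∧
        (∀ (h : H) (v : V) (w : V) (hw : w ∈ Z) (hw' : ρ h⁻¹ w ∈ Z),
          (Φ (ρ h v)).2 ⟨w, hw⟩ = (Φ v).2 ⟨ρ h⁻¹ w, hw'⟩) ∧
        (∀ v v' : V, ε * ((Φ v).2 (Φ v').1) + (Φ v').2 (Φ v).1 = B v v') :=
  stmt_7_general ε ρ hss ρP hPirr hisot horth B hB1 hB2 hB3 hB4 hBinv hBsym hBnd
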